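/- Let μ be the period-3 measure on 2^ℕ (marginals m_n({1}) = 2/3 if 3 ∣ n, m_n({1}) = 1/3 otherwise). For x ∈ 2^ℕ with infinitely many 1s, let n_0(x) < n_1(x) < ⋯ enumerate {n : x(n) = 1}, let r(n) = 1/2 if 3 ∣ n and r(n) = 2 otherwise, and set C_k(x) = ∏_{i=0}^{k−1} r(n_i(x)). Then for μ-almost every x ∈ 2^ℕ, x has infinitely many 1s and limsup_{k→∞} C_k(x) = +∞ and liminf_{k→∞} C_k(x) = 0; that is, the Radon–Nikodym cocycle oscillates along the forward geodesic of the least-deletion map. -/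

import Mathlib

open MeasureTheory Filter Set ENNReal

/-- `μ` is the product of the marginal measures `m n` on `Bool`. -/
def IsProductMeasure (μ : Measure (ℕ → Bool)) (m : ℕ → Measure Bool) : Prop :=
  ∀ (s : Finset ℕ) (a : ℕ → Bool),
    μ {x | ∀ n ∈ s, x n = a n} = ∏ n ∈ s, m n {a n}

/-- The multiplicative jump `m n {0} / m n {1}` of the period-3 measure. -/
noncomputable def r3 (n : ℕ) : ℝ≥0∞ := if 3 ∣ n then 1 / 2 else 2

/-- The cocycle sequence of `x` along the forward geodesic of the least-deletion map:
`C k x = ∏_{i<k} r (nᵢ x)`, where `n₀ x < n₁ x < ⋯` (given by `Nat.nth`) enumerates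
`{n | x n = 1}`. -/
noncomputable def cocycle3 (k : ℕ) (x : ℕ → Bool) : ℝ≥0∞ :=
  ∏ i ∈ Finset.range k, r3 (Nat.nth (fun n => x n = true) i)


/-!
Along the forward geodesic the cocycle changes only at the `1`s of `x`, so after the `1`s below
`k` have been deleted it equals `2 ^ W k`, where `W k = ∑_{n < k, x n = 1} ε n` with `ε n = -1`
for `3 ∣ n` and `ε n = 1` otherwise. Subtracting its mean, which is periodic with zero sum over a
period, turns `W` into a sum of independent centred increments whose absolute values lie in
`[1/3, 1]`. A martingale with bounded increments either converges or is unbounded both above and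
below almost surely; increments bounded away from `0` rule out convergence. Hence `W` is a.s.
unbounded in both directions, which forces infinitely many `1`s (as `|W k|` is at most the number
of `1`s below `k`), and passing to the subsequence `C ∘ count` gives `limsup = ⊤`, `liminf = 0`.
-/

open ProbabilityTheory Finset
open scoped NNReal Topology

lemma not_exists_tendsto_of_le_abs_sub_succ {u : ℕ → ℝ} {δ : ℝ} (hδ : 0 < δ)
    (hu : ∀ i, δ ≤ |u (i + 1) - u i|) : ¬∃ c, Tendsto u atTop (𝓝 c) := by
  rintro ⟨c, hc⟩
  have hdiff : Tendsto (fun i => u (i + 1) - u i) atTop (𝓝 0) := by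
    simpa using (hc.comp (tendsto_add_atTop_nat 1)).sub hc
  obtain ⟨i, hi⟩ := (hdiff.abs.eventually (gt_mem_nhds (by simpa using hδ))).exists
  exact (hu i).not_gt (by simpa using hi)

lemma frequently_le_of_not_bddAbove {α : Type*} [LinearOrder α] {u : ℕ → α}
    (hu : ¬BddAbove (range u)) (b : α) : ∃ᶠ k in atTop, b ≤ u k := by
  by_contra h
  refine hu (isBoundedUnder_of_eventually_le (a := b) ?_).bddAbove_range
  exact (not_frequently.1 h).mono fun _ => le_of_not_ge

lemma Nat.tendsto_count_atTop {p : ℕ → Prop} [DecidablePred p] (hp : (Set.ofPred p).Infinite) :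
    Tendsto (Nat.count p) atTop atTop := by
  refine tendsto_atTop_atTop_of_monotone (Nat.count_monotone p) fun i => ⟨Nat.nth p i + 1, ?_⟩
  rw [Nat.count_succ, Nat.count_nth_of_infinite hp, if_pos (Nat.nth_mem_of_infinite hp i)]
  omega

namespace ENNReal

lemma limsup_zpow_eq_top_of_not_bddAbove {b : ℝ≥0∞} (hb : 1 < b) {u : ℕ → ℤ}
    (hu : ¬BddAbove (range u)) : limsup (fun k => b ^ u k) atTop = ⊤ := by
  refine top_unique (le_of_tendsto' (ENNReal.tendsto_pow_atTop_nhds_top_iff.2 hb) fun N => ?_)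
  refine le_limsup_of_frequently_le' ((frequently_le_of_not_bddAbove hu N).mono fun k hk => ?_)
  rw [← zpow_natCast]
  exact ENNReal.zpow_le_of_le hb.le hk

lemma liminf_zpow_eq_zero_of_not_bddBelow {b : ℝ≥0∞} (hb : 1 < b) {u : ℕ → ℤ}
    (hu : ¬BddBelow (range u)) : liminf (fun k => b ^ u k) atTop = 0 := by
  have hneg : ¬BddAbove (range fun k => -u k) := fun ⟨B, hB⟩ =>
    hu ⟨-B, by rintro _ ⟨k, rfl⟩; exact neg_le.1 (hB ⟨k, rfl⟩)⟩
  simpa [ENNReal.inv_limsup, ← ENNReal.zpow_neg] using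
    congrArg (·⁻¹) (limsup_zpow_eq_top_of_not_bddAbove hb hneg)

end ENNReal

section Martingale

variable {Ω : Type*} {m0 : MeasurableSpace Ω} {μ : Measure Ω}

lemma MeasureTheory.Martingale.ae_not_bddAbove_and_not_bddBelow [IsFiniteMeasure μ]
    {ℱ : Filtration ℕ m0} {f : ℕ → Ω → ℝ} {R : ℝ≥0} {δ : ℝ} (hf : Martingale f ℱ μ) (hδ : 0 < δ)
    (hbdd : ∀ᵐ ω ∂μ, ∀ i, |f (i + 1) ω - f i ω| ≤ R)
    (hgap : ∀ᵐ ω ∂μ, ∀ i, δ ≤ |f (i + 1) ω - f i ω|) :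
    ∀ᵐ ω ∂μ, ¬BddAbove (range fun n => f n ω) ∧ ¬BddBelow (range fun n => f n ω) := by
  filter_upwards [hf.submartingale.bddAbove_iff_exists_tendsto hbdd,
    hf.bddAbove_range_iff_bddBelow_range hbdd, hgap] with ω hconv habove hω
  have hdiv := not_exists_tendsto_of_le_abs_sub_succ (u := fun n => f n ω) hδ hω
  exact ⟨fun h => hdiv (hconv.1 h), fun h => hdiv (hconv.1 (habove.2 h))⟩

lemma ProbabilityTheory.iIndepFun.martingale_sum_range_succ {f : ℕ → Ω → ℝ}
    (hsm : ∀ i, StronglyMeasurable (f i)) (hind : iIndepFun f μ) (hint : ∀ i, Integrable (f i) μ)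
    (hmean : ∀ i, μ[f i] = 0) :
    Martingale (fun n => ∑ i ∈ range (n + 1), f i) (Filtration.natural f hsm) μ := by
  have := hind.isProbabilityMeasure
  refine martingale_of_condExp_sub_eq_zero_nat (fun n => ?_)
    (fun n => integrable_finsetSum' _ fun i _ => hint i) (fun n => ?_)
  · refine Finset.stronglyMeasurable_sum _ fun i hi => ?_
    exact (Filtration.stronglyAdapted_natural hsm i).mono
      (Filtration.mono _ (Nat.lt_succ_iff.1 (Finset.mem_range.1 hi)))
  · rw [Finset.sum_range_succ _ (n + 1), add_sub_cancel_left]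
    exact (hind.condExp_natural_ae_eq_of_lt hsm n.lt_succ_self).trans (by rw [hmean]; rfl)

end Martingale

namespace IsProductMeasure

variable {μ : Measure (ℕ → Bool)} {m : ℕ → Measure Bool}

lemma isProbabilityMeasure (hμ : IsProductMeasure μ m) : IsProbabilityMeasure μ :=
  ⟨by simpa using hμ ∅ fun _ => true⟩

lemma measure_coord_eq_true (hμ : IsProductMeasure μ m) (n : ℕ) :
    μ {x | x n = true} = m n {true} := by
  simpa using hμ {n} fun _ => true

lemma iIndepSet_coord_eq_true (hμ : IsProductMeasure μ m) :
    iIndepSet (fun n => {x : ℕ → Bool | x n = true}) μ := by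
  rw [iIndepSet_iff_meas_biInter fun n => measurableSet_eq_fun (measurable_pi_apply n)
    measurable_const]
  intro s
  have hinter : ⋂ n ∈ s, {x : ℕ → Bool | x n = true} = {x | ∀ n ∈ s, x n = true} := by
    ext x; simp
  rw [hinter, hμ s fun _ => true]
  exact Finset.prod_congr rfl fun n _ => (hμ.measure_coord_eq_true n).symm

end IsProductMeasure

def jump3 (n : ℕ) : ℤ := if 3 ∣ n then -1 else 1

lemma abs_jump3 (n : ℕ) : |jump3 n| = 1 := by
  unfold jump3
  split_ifs <;> rfl

lemma r3_eq_two_zpow (n : ℕ) : r3 n = 2 ^ jump3 n := by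
  unfold r3 jump3
  split_ifs
  · simp [ENNReal.zpow_neg]
  · simp

def walk3 (k : ℕ) (x : ℕ → Bool) : ℤ := ∑ n ∈ range k, if x n = true then jump3 n else 0

lemma cocycle3_count (k : ℕ) (x : ℕ → Bool) :
    cocycle3 (Nat.count (fun n => x n = true) k) x = 2 ^ walk3 k x := by
  induction k with
  | zero => simp [cocycle3, walk3]
  | succ k ih =>
    rw [Nat.count_succ, walk3, sum_range_succ, ← walk3]
    by_cases hx : x k = true
    · rw [if_pos hx, if_pos hx, cocycle3, prod_range_succ, ← cocycle3, ih, Nat.nth_count hx,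
        r3_eq_two_zpow, ENNReal.zpow_add two_ne_zero ENNReal.ofNat_ne_top]
    · simp [hx, ih]

lemma abs_walk3_le_count (k : ℕ) (x : ℕ → Bool) :
    |walk3 k x| ≤ Nat.count (fun n => x n = true) k := by
  induction k with
  | zero => simp [walk3]
  | succ k ih =>
    rw [Nat.count_succ, walk3, sum_range_succ, ← walk3]
    refine (abs_add_le _ _).trans ?_
    push_cast
    gcongr
    split_ifs <;> simp [abs_jump3]

lemma infinite_of_not_bddAbove_walk3 {x : ℕ → Bool} (h : ¬BddAbove (range fun k => walk3 k x)) :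
    {n | x n = true}.Infinite := by
  intro hfin
  refine h ⟨#hfin.toFinset, ?_⟩
  rintro _ ⟨k, rfl⟩
  exact (le_abs_self _).trans <| (abs_walk3_le_count k x).trans <|
    Int.ofNat_le.2 (Nat.count_le_card hfin k)

/-- The mean `jump3 n * μ {x | x n = true}` of the `n`-th step of `walk3`. -/
noncomputable def drift3 (n : ℕ) : ℝ := if 3 ∣ n then -2 / 3 else 1 / 3

lemma sum_range_drift3 (k : ℕ) :
    ∑ n ∈ range k, drift3 n = if k % 3 = 1 then -2 / 3 else if k % 3 = 2 then -1 / 3 else 0 := by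
  induction k with
  | zero => simp
  | succ k ih =>
    rw [sum_range_succ, ih]
    rcases (by omega : k % 3 = 0 ∨ k % 3 = 1 ∨ k % 3 = 2) with h | h | h <;>
      simp [drift3, Nat.dvd_iff_mod_eq_zero, h, show (k + 1) % 3 = (k % 3 + 1) % 3 by omega] <;>
      norm_num

lemma abs_sum_range_drift3_le (k : ℕ) : |∑ n ∈ range k, drift3 n| ≤ 1 := by
  rw [sum_range_drift3]
  split_ifs <;> norm_num [abs_div]

noncomputable def increment3 (n : ℕ) (x : ℕ → Bool) : ℝ :=
  jump3 n * {y : ℕ → Bool | y n = true}.indicator (fun _ => 1) x - drift3 n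

lemma sum_range_increment3 (k : ℕ) (x : ℕ → Bool) :
    ∑ n ∈ range k, increment3 n x = walk3 k x - ∑ n ∈ range k, drift3 n := by
  simp only [increment3, walk3, sum_sub_distrib, Int.cast_sum]
  congr 1
  refine sum_congr rfl fun n _ => ?_
  by_cases hx : x n = true <;> simp [hx]

lemma abs_increment3_le (n : ℕ) (x : ℕ → Bool) : |increment3 n x| ≤ 1 := by
  by_cases hx : x n = true <;> by_cases h3 : 3 ∣ n <;>
    norm_num [increment3, jump3, drift3, hx, h3, abs_le]

lemma one_third_le_abs_increment3 (n : ℕ) (x : ℕ → Bool) : 1 / 3 ≤ |increment3 n x| := by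
  by_cases hx : x n = true <;> by_cases h3 : 3 ∣ n <;>
    norm_num [increment3, jump3, drift3, hx, h3, le_abs]

lemma measurable_increment3 (n : ℕ) : Measurable (increment3 n) :=
  ((measurable_const.indicator (measurableSet_eq_fun (measurable_pi_apply n)
    measurable_const)).const_mul _).sub_const _

namespace IsProductMeasure

variable {m : ℕ → Measure Bool} {μ : Measure (ℕ → Bool)}

lemma iIndepFun_increment3 (hμ : IsProductMeasure μ m) : iIndepFun increment3 μ :=
  hμ.iIndepSet_coord_eq_true.iIndepFun_indicator.comp (fun n t => jump3 n * t - drift3 n)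
    fun _ => by fun_prop

lemma integral_increment3 (hm : ∀ n, m n {true} = if 3 ∣ n then (2 : ℝ≥0∞) / 3 else 1 / 3)
    (hμ : IsProductMeasure μ m) (n : ℕ) : μ[increment3 n] = 0 := by
  have := hμ.isProbabilityMeasure
  have hs : MeasurableSet {y : ℕ → Bool | y n = true} :=
    measurableSet_eq_fun (measurable_pi_apply n) measurable_const
  simp only [increment3]
  rw [integral_sub ((integrable_const _).indicator hs |>.const_mul _) (integrable_const _),
    integral_const_mul, integral_indicator_const _ hs, integral_const]
  simp only [measureReal_def, hμ.measure_coord_eq_true, hm]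
  by_cases h3 : 3 ∣ n <;> norm_num [jump3, drift3, h3, ENNReal.toReal_div]

lemma martingale_sum_increment3
    (hm : ∀ n, m n {true} = if 3 ∣ n then (2 : ℝ≥0∞) / 3 else 1 / 3)
    (hμ : IsProductMeasure μ m) :
    Martingale (fun n => ∑ i ∈ range (n + 1), increment3 i)
      (Filtration.natural increment3 fun n => (measurable_increment3 n).stronglyMeasurable) μ := by
  have := hμ.isProbabilityMeasure
  refine hμ.iIndepFun_increment3.martingale_sum_range_succ _ (fun n => ?_)
    (hμ.integral_increment3 hm)
  exact (integrable_const (1 : ℝ)).mono' (measurable_increment3 n).aestronglyMeasurable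
    (ae_of_all _ fun x => by simpa using abs_increment3_le n x)

lemma ae_not_bddAbove_sum_increment3_and_not_bddBelow
    (hm : ∀ n, m n {true} = if 3 ∣ n then (2 : ℝ≥0∞) / 3 else 1 / 3)
    (hμ : IsProductMeasure μ m) :
    ∀ᵐ x ∂μ, ¬BddAbove (range fun n => ∑ i ∈ range (n + 1), increment3 i x) ∧
      ¬BddBelow (range fun n => ∑ i ∈ range (n + 1), increment3 i x) := by
  have := hμ.isProbabilityMeasure
  have hstep (n : ℕ) (x : ℕ → Bool) :
      ∑ i ∈ range (n + 1 + 1), increment3 i x - ∑ i ∈ range (n + 1), increment3 i x =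
        increment3 (n + 1) x := by
    rw [sum_range_succ _ (n + 1), add_sub_cancel_left]
  simpa using (hμ.martingale_sum_increment3 hm).ae_not_bddAbove_and_not_bddBelow (R := 1)
    (δ := 1 / 3) (by norm_num)
    (ae_of_all _ fun x n => by simpa [hstep] using abs_increment3_le (n + 1) x)
    (ae_of_all _ fun x n => by simpa [hstep] using one_third_le_abs_increment3 (n + 1) x)

lemma ae_not_bddAbove_walk3_and_not_bddBelow
    (hm : ∀ n, m n {true} = if 3 ∣ n then (2 : ℝ≥0∞) / 3 else 1 / 3)
    (hμ : IsProductMeasure μ m) :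
    ∀ᵐ x ∂μ, ¬BddAbove (range fun k => walk3 k x) ∧ ¬BddBelow (range fun k => walk3 k x) := by
  filter_upwards [hμ.ae_not_bddAbove_sum_increment3_and_not_bddBelow hm] with x ⟨habove, hbelow⟩
  have hclose (n : ℕ) := abs_le.1 (abs_sum_range_drift3_le (n + 1))
  constructor
  · rintro ⟨B, hB⟩
    refine habove ⟨B + 1, ?_⟩
    rintro _ ⟨n, rfl⟩
    have hwalk : walk3 (n + 1) x ≤ B := hB ⟨n + 1, rfl⟩
    simp only [sum_range_increment3]
    linarith [hclose n, (Int.cast_le (R := ℝ)).2 hwalk]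
  · rintro ⟨B, hB⟩
    refine hbelow ⟨B - 1, ?_⟩
    rintro _ ⟨n, rfl⟩
    have hwalk : B ≤ walk3 (n + 1) x := hB ⟨n + 1, rfl⟩
    simp only [sum_range_increment3]
    linarith [hclose n, (Int.cast_le (R := ℝ)).2 hwalk]

end IsProductMeasure

theorem period3_cocycle_oscillates_general
    (m : ℕ → Measure Bool)
    (hm : ∀ n, m n {true} = if 3 ∣ n then (2 : ℝ≥0∞) / 3 else 1 / 3)
    (μ : Measure (ℕ → Bool)) (hμ : IsProductMeasure μ m) :
    ∀ᵐ x ∂μ, {n : ℕ | x n = true}.Infinite ∧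
      Filter.limsup (fun k => cocycle3 k x) atTop = ⊤ ∧
      Filter.liminf (fun k => cocycle3 k x) atTop = 0 := by
  filter_upwards [hμ.ae_not_bddAbove_walk3_and_not_bddBelow hm] with x ⟨habove, hbelow⟩
  have hinf := infinite_of_not_bddAbove_walk3 habove
  have hcount := Nat.tendsto_count_atTop hinf
  have hcomp : (fun k => cocycle3 k x) ∘ Nat.count (fun n => x n = true) =
      fun k => (2 : ℝ≥0∞) ^ walk3 k x := funext fun k => cocycle3_count k x
  refine ⟨hinf, top_unique ?_, le_antisymm ?_ bot_le⟩
  · calc ⊤ = limsup ((fun k => cocycle3 k x) ∘ Nat.count (fun n => x n = true)) atTop := by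
          rw [hcomp, ENNReal.limsup_zpow_eq_top_of_not_bddAbove one_lt_two habove]
      _ ≤ _ := hcount.limsup_comp_le_limsup
  · calc _ ≤ liminf ((fun k => cocycle3 k x) ∘ Nat.count (fun n => x n = true)) atTop :=
          hcount.liminf_le_liminf_comp
      _ = 0 := by rw [hcomp, ENNReal.liminf_zpow_eq_zero_of_not_bddBelow one_lt_two hbelow]

/-- for the period-3 product measure (`m n {1} = 2/3` when `3 ∣ n` and `1/3`
otherwise), almost every `x` has infinitely many `1`s and the cocycle sequence along the forward
geodesic of the least-deletion map oscillates: its limsup is `∞` and its liminf is `0`. -/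
theorem period3_cocycle_oscillates
    (m : ℕ → Measure Bool) (hprob : ∀ n, IsProbabilityMeasure (m n))
    (hm : ∀ n, m n {true} = if 3 ∣ n then (2 : ℝ≥0∞) / 3 else 1 / 3)
    (μ : Measure (ℕ → Bool)) (hμ : IsProductMeasure μ m) :
    ∀ᵐ x ∂μ, {n : ℕ | x n = true}.Infinite ∧
      Filter.limsup (fun k => cocycle3 k x) atTop = ⊤ ∧
      Filter.liminf (fun k => cocycle3 k x) atTop = 0 :=
  period3_cocycle_oscillates_general m hm μ hμ
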